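/- arXiv:1906.10053 — 3 statements merged into one kernel-verified Lean document; each statement's English description precedes it below -/
import Mathlib

section
/- If in addition each f_i is μ_{f_i}-strongly convex and G is convex, then for every x∈ℝ^{n_1}×⋯×ℝ^{n_N}, letting z=T(x) and x* be the unique minimizer of Φ, one has ½‖z−x*‖²_{μ_F} ≤ φ_Γ(x) − min Φ, where μ_F=(1/N)·blockdiag(μ_{f_1}I_{n_1},…,μ_{f_N}I_{n_N}). -/
/-!
Since `z` minimizes the model `M(·, x)`, `φ_Γ(x) = M(z, x)`. Because `γᵢ Lᵢ < N`, the descent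
lemma `fᵢ(v) ≤ fᵢ(u) + ⟨∇fᵢ(u), v - u⟩ + Lᵢ/2 ‖v - u‖²` shows that the model majorizes `Φ`, so
`Φ(z) ≤ φ_Γ(x)`. On the other hand, strong convexity of `F` and convexity of `G` give, for
`t ∈ (0, 1)`, `Φ(x*) ≤ Φ(t z + (1 - t) x*) ≤ t Φ(z) + (1 - t) Φ(x*) - t (1 - t) ½‖z - x*‖²_{μ_F}`;
dividing by `t` and letting `t → 0` yields `Φ(x*) + ½‖z - x*‖²_{μ_F} ≤ Φ(z)`.
-/

open Filter Topology Metric Bornology Set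
open scoped RealInnerProductSpace

noncomputable section

variable {N : ℕ} {E : Fin N → Type*}
  [∀ i, NormedAddCommGroup (E i)] [∀ i, InnerProductSpace ℝ (E i)]
  [∀ i, CompleteSpace (E i)]

/-- `F(x) = (1/N) ∑ᵢ fᵢ(xᵢ)`, the smooth separable part of the cost. -/
def Fsum (f : ∀ i, E i → ℝ) (x : PiLp 2 E) : ℝ := (N : ℝ)⁻¹ * ∑ i, f i (x i)

/-- `Φ = F + G`, the total cost, extended-real-valued. -/
def Phi (f : ∀ i, E i → ℝ) (G : PiLp 2 E → EReal) (x : PiLp 2 E) : EReal :=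
  ((Fsum f x : ℝ) : EReal) + G x

/-- The model `M(w,x) = F(x) + ⟨∇F(x),w-x⟩ + G(w) + ½‖w-x‖²_{Γ⁻¹}`, where `∇F(x)ᵢ = f'ᵢ(xᵢ)/N`
and `Γ = blockdiag(γ₁ I, …, γ_N I)`. -/
def Mdl (f : ∀ i, E i → ℝ) (f' : ∀ i, E i → E i) (γ : Fin N → ℝ)
    (G : PiLp 2 E → EReal) (w x : PiLp 2 E) : EReal :=
  ((Fsum f x + (N : ℝ)⁻¹ * ∑ i, ⟪f' i (x i), w i - x i⟫
      + 2⁻¹ * ∑ i, (γ i)⁻¹ * ‖w i - x i‖ ^ 2 : ℝ) : EReal) + G w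

/-- The forward-backward operator `T(x) = argmin_w M(w,x)`. -/
def Tmap (f : ∀ i, E i → ℝ) (f' : ∀ i, E i → E i) (γ : Fin N → ℝ)
    (G : PiLp 2 E → EReal) (x : PiLp 2 E) : Set (PiLp 2 E) :=
  {z | ∀ w, Mdl f f' γ G z x ≤ Mdl f f' γ G w x}

/-- The `Γ⁻¹`-proximal mapping
`prox_G^{Γ⁻¹}(u) = argmin_w { G(w) + ½‖w-u‖²_{Γ⁻¹} }`. -/
def proxSet (γ : Fin N → ℝ) (G : PiLp 2 E → EReal) (u : PiLp 2 E) : Set (PiLp 2 E) :=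
  {z | ∀ w, G z + ((2⁻¹ * ∑ i, (γ i)⁻¹ * ‖z i - u i‖ ^ 2 : ℝ) : EReal)
        ≤ G w + ((2⁻¹ * ∑ i, (γ i)⁻¹ * ‖w i - u i‖ ^ 2 : ℝ) : EReal)}

/-- The forward (gradient) step `x - Γ∇F(x)`. -/
def fwd (f' : ∀ i, E i → E i) (γ : Fin N → ℝ) (x : PiLp 2 E) : PiLp 2 E :=
  WithLp.toLp 2 (fun i => x i - (γ i * (N : ℝ)⁻¹) • f' i (x i))

/-- Convexity for an extended-real-valued function. -/
def ERealConvex {X : Type*} [AddCommMonoid X] [Module ℝ X] (G : X → EReal) : Prop :=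
  ∀ x y : X, ∀ a b : ℝ, 0 ≤ a → 0 ≤ b → a + b = 1 →
    G (a • x + b • y) ≤ (a : ℝ) * G x + (b : ℝ) * G y

/-- The regular (Fréchet) subdifferential `∂̂h(x)` of an extended-real-valued function. -/
def frechetSubdiff {X : Type*} [NormedAddCommGroup X] [InnerProductSpace ℝ X]
    (h : X → EReal) (x : X) : Set X :=
  {v | h x ≠ ⊤ ∧ h x ≠ ⊥ ∧ ∀ ε : ℝ, 0 < ε →
      ∀ᶠ w in 𝓝 x, h x + ((⟪v, w - x⟫ - ε * ‖w - x‖ : ℝ) : EReal) ≤ h w}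

/-- The limiting subdifferential `∂h(x)`. -/
def limitingSubdiff {X : Type*} [NormedAddCommGroup X] [InnerProductSpace ℝ X]
    (h : X → EReal) (x : X) : Set X :=
  {v | ∃ u w : ℕ → X, (∀ k, w k ∈ frechetSubdiff h (u k)) ∧
      Tendsto u atTop (𝓝 x) ∧ Tendsto (fun k => h (u k)) atTop (𝓝 (h x)) ∧
      Tendsto w atTop (𝓝 v)}

/-- The Kurdyka-Łojasiewicz property with exponent `θ` (at every point of `dom ∂h`),
with desingularizing function `ψ(s) = ϱ s^{1-θ}`. -/
def HasKLExponent {X : Type*} [NormedAddCommGroup X] [InnerProductSpace ℝ X]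
    (h : X → EReal) (θ : ℝ) : Prop :=
  ∀ xb : X, (limitingSubdiff h xb).Nonempty →
    ∃ ε η ϱ : ℝ, 0 < ε ∧ 0 < η ∧ 0 < ϱ ∧
      ∀ w : X, ‖w - xb‖ < ε → h xb < h w → h w < h xb + ((η : ℝ) : EReal) →
        ∀ v ∈ limitingSubdiff h w,
          1 ≤ ϱ * (1 - θ) * (h w - h xb).toReal ^ (-θ) * ‖v‖

theorem le_add_inner_add_sq_of_lipschitz_gradient {X : Type*} [NormedAddCommGroup X]
    [InnerProductSpace ℝ X] [CompleteSpace X] {f : X → ℝ} {f' : X → X} {L : ℝ}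
    (hf : ∀ u, HasGradientAt f (f' u) u) (hlip : ∀ u v, ‖f' u - f' v‖ ≤ L * ‖u - v‖) (u v : X) :
    f v ≤ f u + ⟪f' u, v - u⟫ + L / 2 * ‖v - u‖ ^ 2 := by
  set d := v - u
  set g : ℝ → ℝ := fun t => f (u + t • d) - t * ⟪f' u, d⟫ - L / 2 * t ^ 2 * ‖d‖ ^ 2
  have hg : ∀ t, HasDerivAt g (⟪f' (u + t • d) - f' u, d⟫ - L * t * ‖d‖ ^ 2) t := by
    intro t
    have hline : HasDerivAt (fun t : ℝ => u + t • d) d t := by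
      simpa using ((hasDerivAt_id t).smul_const d).const_add u
    have hfl := (hf (u + t • d)).hasFDerivAt.comp_hasDerivAt t hline
    have hq := ((hasDerivAt_pow 2 t).const_mul (L / 2)).mul_const (‖d‖ ^ 2)
    refine ((hfl.sub ((hasDerivAt_id t).mul_const ⟪f' u, d⟫)).sub hq).congr_deriv ?_
    simp only [InnerProductSpace.toDual_apply_apply, inner_sub_left]
    ring
  have hderiv_nonpos : ∀ t ∈ interior (Icc (0 : ℝ) 1), deriv g t ≤ 0 := by
    intro t ht
    rw [interior_Icc] at ht
    rw [(hg t).deriv, sub_nonpos]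
    calc ⟪f' (u + t • d) - f' u, d⟫ ≤ ‖f' (u + t • d) - f' u‖ * ‖d‖ := real_inner_le_norm _ _
      _ ≤ L * ‖t • d‖ * ‖d‖ := by
        gcongr
        simpa using hlip (u + t • d) u
      _ = L * t * ‖d‖ ^ 2 := by rw [norm_smul, Real.norm_of_nonneg ht.1.le]; ring
  have hdiff : Differentiable ℝ g := fun t => (hg t).differentiableAt
  have hanti := antitoneOn_of_deriv_nonpos (convex_Icc 0 1) hdiff.continuous.continuousOn
    hdiff.differentiableOn hderiv_nonpos
  have h0 : g 0 = f u := by simp [g]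
  have h1 : g 1 = f v - ⟪f' u, d⟫ - L / 2 * ‖d‖ ^ 2 := by simp [g, d]
  have := hanti (left_mem_Icc.2 zero_le_one) (right_mem_Icc.2 zero_le_one) zero_le_one
  linarith

theorem add_le_of_forall_le_convex_combination {p q c : ℝ}
    (h : ∀ t ∈ Ioo (0 : ℝ) 1, p ≤ t * q + (1 - t) * p - t * (1 - t) * c) : p + c ≤ q := by
  have hlim : Tendsto (fun t : ℝ => p + (1 - t) * c) (𝓝[>] 0) (𝓝 (p + c)) := by
    refine tendsto_nhdsWithin_of_tendsto_nhds ?_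
    exact (by fun_prop : Continuous fun t : ℝ => p + (1 - t) * c).tendsto' 0 _ (by simp)
  refine le_of_tendsto hlim ?_
  filter_upwards [Ioo_mem_nhdsGT zero_lt_one] with t ht
  have := h t ht
  nlinarith [ht.1]

omit [∀ i, CompleteSpace (E i)] in
theorem fsum_convex_combination_le {f : ∀ i, E i → ℝ} {μ : Fin N → ℝ}
    (hsc : ∀ i, StrongConvexOn univ (μ i) (f i)) (x y : PiLp 2 E) {a b : ℝ}
    (ha : 0 ≤ a) (hb : 0 ≤ b) (hab : a + b = 1) :
    Fsum f (a • x + b • y) ≤ a * Fsum f x + b * Fsum f y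
      - a * b * (2⁻¹ * ∑ i, (μ i / (N : ℝ)) * ‖x i - y i‖ ^ 2) := by
  have hterm : ∀ i, f i (a • x i + b • y i)
      ≤ a * f i (x i) + b * f i (y i) - a * b * (μ i / 2 * ‖x i - y i‖ ^ 2) :=
    fun i => (hsc i).2 (mem_univ _) (mem_univ _) ha hb hab
  have hsum := Finset.sum_le_sum fun i (_ : i ∈ Finset.univ) => hterm i
  have hμ : ∑ i, μ i / (N : ℝ) * ‖x i - y i‖ ^ 2
      = 2 * (N : ℝ)⁻¹ * ∑ i, μ i / 2 * ‖x i - y i‖ ^ 2 := by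
    rw [Finset.mul_sum]
    exact Finset.sum_congr rfl fun i _ => by ring
  simp only [Fsum, PiLp.add_apply, PiLp.smul_apply, Finset.sum_sub_distrib, Finset.sum_add_distrib,
    ← Finset.mul_sum, hμ] at hsum ⊢
  linear_combination (N : ℝ)⁻¹ * hsum

theorem phi_le_mdl {f : ∀ i, E i → ℝ} {f' : ∀ i, E i → E i} {L γ : Fin N → ℝ}
    (G : PiLp 2 E → EReal) (hf : ∀ i (u : E i), HasGradientAt (f i) (f' i u) u)
    (hlip : ∀ i (u v : E i), ‖f' i u - f' i v‖ ≤ L i * ‖u - v‖)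
    (hγ : ∀ i, 0 < γ i) (hγL : ∀ i, γ i * L i < (N : ℝ)) (w x : PiLp 2 E) :
    Phi f G w ≤ Mdl f f' γ G w x := by
  have hterm : ∀ i, (N : ℝ)⁻¹ * f i (w i) ≤ (N : ℝ)⁻¹ * f i (x i)
      + (N : ℝ)⁻¹ * ⟪f' i (x i), w i - x i⟫ + 2⁻¹ * ((γ i)⁻¹ * ‖w i - x i‖ ^ 2) := by
    intro i
    have hN : (0 : ℝ) < N := by exact_mod_cast i.pos
    have hdesc := le_add_inner_add_sq_of_lipschitz_gradient (hf i) (hlip i) (x i) (w i)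
    have hLγ : (N : ℝ)⁻¹ * L i ≤ (γ i)⁻¹ := by
      rw [inv_mul_le_iff₀ hN, ← div_eq_mul_inv, le_div_iff₀ (hγ i)]
      linarith [hγL i]
    have := mul_le_mul_of_nonneg_right hLγ (sq_nonneg ‖w i - x i‖)
    linarith [mul_le_mul_of_nonneg_left hdesc (inv_nonneg.2 hN.le)]
  have hsum := Finset.sum_le_sum fun i (_ : i ∈ Finset.univ) => hterm i
  simp only [Finset.sum_add_distrib, ← Finset.mul_sum] at hsum
  have hF : Fsum f w ≤ Fsum f x + (N : ℝ)⁻¹ * ∑ i, ⟪f' i (x i), w i - x i⟫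
      + 2⁻¹ * ∑ i, (γ i)⁻¹ * ‖w i - x i‖ ^ 2 := by
    unfold Fsum
    linarith
  exact add_le_add (EReal.coe_le_coe_iff.2 hF) le_rfl

omit [∀ i, CompleteSpace (E i)] in
theorem phi_add_quadratic_le_of_minimizer {f : ∀ i, E i → ℝ} {μ : Fin N → ℝ}
    {G : PiLp 2 E → EReal} (hsc : ∀ i, StrongConvexOn univ (μ i) (f i)) (hGconv : ERealConvex G)
    {xs : PiLp 2 E} (hxs : ∀ w, Phi f G xs ≤ Phi f G w) (z : PiLp 2 E) :
    Phi f G xs + ((2⁻¹ * ∑ i, (μ i / (N : ℝ)) * ‖z i - xs i‖ ^ 2 : ℝ) : EReal) ≤ Phi f G z := by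
  cases hGz : G z using EReal.rec with
  | bot =>
    have : Phi f G xs = ⊥ := le_bot_iff.1 ((hxs z).trans_eq (by simp [Phi, hGz]))
    simp [this]
  | top => simp [Phi, hGz]
  | coe gz =>
    cases hGxs : G xs using EReal.rec with
    | bot => simp [Phi, hGxs]
    | top =>
      have := hxs z
      rw [Phi, Phi, hGz, hGxs, EReal.coe_add_top, top_le_iff, ← EReal.coe_add] at this
      exact absurd this (EReal.coe_ne_top _)
    | coe gx =>
      rw [Phi, Phi, hGz, hGxs, ← EReal.coe_add, ← EReal.coe_add, ← EReal.coe_add,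
        EReal.coe_le_coe_iff]
      refine add_le_of_forall_le_convex_combination fun t ht => ?_
      have h1t : 0 ≤ 1 - t := by linarith [ht.2]
      have hG : G (t • z + (1 - t) • xs) ≤ ((t * gz + (1 - t) * gx : ℝ) : EReal) := by
        have := hGconv z xs t (1 - t) ht.1.le h1t (by ring)
        rwa [hGz, hGxs, ← EReal.coe_mul, ← EReal.coe_mul, ← EReal.coe_add] at this
      have hmin : Fsum f xs + gx ≤ Fsum f (t • z + (1 - t) • xs) + (t * gz + (1 - t) * gx) := by
        have := (hxs (t • z + (1 - t) • xs)).trans (add_le_add le_rfl hG)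
        rwa [Phi, hGxs, ← EReal.coe_add, ← EReal.coe_add, EReal.coe_le_coe_iff] at this
      have hF := fsum_convex_combination_le hsc z xs ht.1.le h1t (by ring)
      linarith

theorem fbe_strongly_convex_lower_bound_general
    (f : ∀ i, E i → ℝ) (f' : ∀ i, E i → E i) (L γ : Fin N → ℝ)
    (G : PiLp 2 E → EReal)
    (hf : ∀ i (u : E i), HasGradientAt (f i) (f' i u) u)
    (hlip : ∀ i (u v : E i), ‖f' i u - f' i v‖ ≤ L i * ‖u - v‖)
    (hγ : ∀ i, 0 < γ i) (hγL : ∀ i, γ i * L i < (N : ℝ))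
    (φ : PiLp 2 E → ℝ)
    (hφ : ∀ x, ((φ x : ℝ) : EReal) = ⨅ w, Mdl f f' γ G w x)
    (μ : Fin N → ℝ)
    (hsc : ∀ i, StrongConvexOn Set.univ (μ i) (f i))
    (hGconv : ERealConvex G) :
    ∀ x : PiLp 2 E, ∀ z ∈ Tmap f f' γ G x,
      ∀ xs : PiLp 2 E, (∀ w, Phi f G xs ≤ Phi f G w) →
        Phi f G xs + ((2⁻¹ * ∑ i, (μ i / (N : ℝ)) * ‖z i - xs i‖ ^ 2 : ℝ) : EReal)
          ≤ ((φ x : ℝ) : EReal) := by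
  intro x z hz xs hxs
  have hφz : Mdl f f' γ G z x = φ x := by
    rw [hφ x]
    exact le_antisymm (le_iInf hz) (iInf_le _ z)
  calc _ ≤ Phi f G z := phi_add_quadratic_le_of_minimizer hsc hGconv hxs z
    _ ≤ Mdl f f' γ G z x := phi_le_mdl G hf hlip hγ hγL z x
    _ = φ x := hφz

/-- Lemma 2.3(iii): if each fᵢ is μ_{f_i}-strongly convex and G is convex,
then ½‖z - x*‖²_{μ_F} ≤ φ_Γ(x) - min Φ for z ∈ T(x) and x* the (unique) minimizer of Φ. -/
theorem fbe_strongly_convex_lower_bound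
    (f : ∀ i, E i → ℝ) (f' : ∀ i, E i → E i) (L γ : Fin N → ℝ)
    (G : PiLp 2 E → EReal)
    (hf : ∀ i (u : E i), HasGradientAt (f i) (f' i u) u)
    (hL : ∀ i, 0 ≤ L i)
    (hlip : ∀ i (u v : E i), ‖f' i u - f' i v‖ ≤ L i * ‖u - v‖)
    (hγ : ∀ i, 0 < γ i) (hγL : ∀ i, γ i * L i < (N : ℝ))
    (hGlsc : LowerSemicontinuous G)
    (hGproper : ∃ w, G w ≠ ⊤) (hGbot : ∀ w, G w ≠ ⊥)
    (hargmin : ∃ xs : PiLp 2 E, ∀ w, Phi f G xs ≤ Phi f G w)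
    (φ : PiLp 2 E → ℝ)
    (hφ : ∀ x, ((φ x : ℝ) : EReal) = ⨅ w, Mdl f f' γ G w x)
    (μ : Fin N → ℝ) (hμ : ∀ i, 0 < μ i)
    (hsc : ∀ i, StrongConvexOn Set.univ (μ i) (f i))
    (hGconv : ERealConvex G) :
    ∀ x : PiLp 2 E, ∀ z ∈ Tmap f f' γ G x,
      ∀ xs : PiLp 2 E, (∀ w, Phi f G xs ≤ Phi f G w) →
        Phi f G xs + ((2⁻¹ * ∑ i, (μ i / (N : ℝ)) * ‖z i - xs i‖ ^ 2 : ℝ) : EReal)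
          ≤ ((φ x : ℝ) : EReal) :=
  fbe_strongly_convex_lower_bound_general f f' L γ G hf hlip hγ hγL φ hφ μ hsc hGconv
end
end

section
/- The forward-backward envelope φ_Γ is level bounded (i.e., every sublevel set {x : φ_Γ(x) ≤ α} is bounded) if and only if Φ is level bounded. -/
open Filter Topology Metric Bornology Set
open scoped RealInnerProductSpace

noncomputable section

variable {N : ℕ} {E : Fin N → Type*}
  [∀ i, NormedAddCommGroup (E i)] [∀ i, InnerProductSpace ℝ (E i)]
  [∀ i, CompleteSpace (E i)]

/-!
Taking `w = x` in the infimum gives `φ_Γ ≤ Φ`, hence one direction. Conversely, the descent lemma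
for each `fᵢ` shows that the model satisfies `M(w, x) ≥ Φ(w) + c‖w - x‖²` with
`c = minᵢ (γᵢ⁻¹ - Lᵢ/N)/2 > 0`. So if `φ_Γ(x) ≤ α`, some `w` has `Φ(w) ≤ α + 1` and
`c‖w - x‖² ≤ α + 1 - min Φ`: the sublevel set of `φ_Γ` lies in a fixed thickening of a sublevel set
of `Φ`.
-/

section Descent

variable {X : Type*} [NormedAddCommGroup X] [InnerProductSpace ℝ X]
  {f : X → ℝ} {g : X → X} {L : ℝ}

lemma inner_sub_le_of_lipschitz (hlip : ∀ u v, ‖g u - g v‖ ≤ L * ‖u - v‖) (x d : X)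
    {t : ℝ} (ht : 0 ≤ t) : ⟪g (x + t • d) - g x, d⟫ ≤ L * t * ‖d‖ ^ 2 :=
  calc ⟪g (x + t • d) - g x, d⟫ ≤ ‖g (x + t • d) - g x‖ * ‖d‖ := real_inner_le_norm _ _
    _ ≤ L * ‖x + t • d - x‖ * ‖d‖ := by gcongr; exact hlip _ _
    _ = L * t * ‖d‖ ^ 2 := by
      rw [add_sub_cancel_left, norm_smul, Real.norm_of_nonneg ht]; ring

lemma descent_lemma [CompleteSpace X] (hf : ∀ u, HasGradientAt f (g u) u)
    (hlip : ∀ u v, ‖g u - g v‖ ≤ L * ‖u - v‖) (x w : X) :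
    f w ≤ f x + ⟪g x, w - x⟫ + L / 2 * ‖w - x‖ ^ 2 := by
  set d := w - x
  set ψ : ℝ → ℝ := fun t => f (x + t • d) - t * ⟪g x, d⟫ - L / 2 * t ^ 2 * ‖d‖ ^ 2
  have hψ : ∀ t, HasDerivAt ψ (⟪g (x + t • d), d⟫ - ⟪g x, d⟫ - L * t * ‖d‖ ^ 2) t := by
    intro t
    have hline : HasDerivAt (fun s : ℝ => x + s • d) d t := by
      simpa using ((hasDerivAt_id t).smul_const d).const_add x
    have hquad := ((hasDerivAt_pow 2 t).const_mul (L / 2)).mul_const (‖d‖ ^ 2)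
    refine ((((hf _).hasFDerivAt.comp_hasDerivAt t hline).sub
      ((hasDerivAt_id t).mul_const ⟪g x, d⟫)).sub hquad).congr_deriv ?_
    rw [InnerProductSpace.toDual_apply_apply]
    push_cast
    ring
  have hanti : AntitoneOn ψ (Set.Icc 0 1) := by
    refine antitoneOn_of_deriv_nonpos (convex_Icc 0 1)
      (fun t _ => (hψ t).continuousAt.continuousWithinAt)
      (fun t _ => (hψ t).differentiableAt.differentiableWithinAt) fun t ht => ?_
    rw [interior_Icc] at ht
    have := inner_sub_le_of_lipschitz hlip x d ht.1.le
    rw [(hψ t).deriv, ← inner_sub_left]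
    linarith
  have h10 : ψ 1 ≤ ψ 0 := hanti (by simp) (by simp) zero_le_one
  simp only [ψ, d, one_smul, add_sub_cancel, zero_smul, add_zero] at h10
  linarith

end Descent

lemma exists_pos_forall_le {ι : Type*} [Finite ι] {a : ι → ℝ} (ha : ∀ i, 0 < a i) :
    ∃ c > 0, ∀ i, c ≤ a i :=
  (Eventually.and (self_mem_nhdsWithin : ∀ᶠ c in 𝓝[>] (0 : ℝ), 0 < c) (eventually_all.2 fun i =>
    (eventually_le_nhds (ha i)).filter_mono nhdsWithin_le_nhds)).exists

lemma isBounded_sublevel_of_iInf_ge_add_sq {X : Type*} [PseudoMetricSpace X]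
    {Φ : X → EReal} {M : X → X → EReal} {ψ : X → ℝ} {c m : ℝ} (hc : 0 < c)
    (hm : ∀ w, (m : EReal) ≤ Φ w) (hM : ∀ w x, Φ w + ((c * dist w x ^ 2 : ℝ) : EReal) ≤ M w x)
    (hψ : ∀ x, (ψ x : EReal) = ⨅ w, M w x) (hΦ : ∀ α : ℝ, IsBounded {x | Φ x ≤ α}) (α : ℝ) :
    IsBounded {x | ψ x ≤ α} := by
  refine ((hΦ (α + 1)).cthickening (δ := √((α + 1 - m) / c))).subset fun x hx => ?_
  obtain ⟨w, hw⟩ : ∃ w, M w x < ((α + 1 : ℝ) : EReal) := by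
    rw [← iInf_lt_iff, ← hψ]
    exact EReal.coe_lt_coe_iff.2 (by linarith [show ψ x ≤ α from hx])
  have hlt := (hM w x).trans_lt hw
  have hsq : (0 : EReal) ≤ ((c * dist w x ^ 2 : ℝ) : EReal) :=
    EReal.coe_nonneg.2 (by positivity)
  refine Metric.mem_cthickening_of_dist_le x w _ _ (le_add_of_nonneg_right hsq |>.trans hlt.le) ?_
  have hreal : m + c * dist w x ^ 2 < α + 1 := by
    exact_mod_cast (add_le_add_left (hm w) _).trans_lt hlt
  rw [dist_comm]
  exact Real.le_sqrt_of_sq_le <| (le_div_iff₀ hc).2 (by linarith)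

section FBE

variable {f : ∀ i, E i → ℝ} {f' : ∀ i, E i → E i} {L γ : Fin N → ℝ} {G : PiLp 2 E → EReal}

/-- `((γ i)⁻¹ - L i / N) / 2` is the gap between the quadratic term of the model and the quadratic
term of the descent lemma for `f i / N`. -/
lemma Phi_add_sq_le_Mdl (hf : ∀ i (u : E i), HasGradientAt (f i) (f' i u) u)
    (hlip : ∀ i (u v : E i), ‖f' i u - f' i v‖ ≤ L i * ‖u - v‖)
    {c : ℝ} (hc : ∀ i, c ≤ ((γ i)⁻¹ - L i / N) / 2) (w x : PiLp 2 E) :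
    Phi f G w + ((c * ‖w - x‖ ^ 2 : ℝ) : EReal) ≤ Mdl f f' γ G w x := by
  have hcomp : ∀ i, (N : ℝ)⁻¹ * f i (w i) + c * ‖w i - x i‖ ^ 2 ≤
      (N : ℝ)⁻¹ * f i (x i) + (N : ℝ)⁻¹ * ⟪f' i (x i), w i - x i⟫
        + 2⁻¹ * ((γ i)⁻¹ * ‖w i - x i‖ ^ 2) := by
    intro i
    have hN : (0 : ℝ) < N := by exact_mod_cast i.pos
    have hdesc := mul_le_mul_of_nonneg_left
      (descent_lemma (hf i) (hlip i) (x i) (w i)) (inv_nonneg.2 hN.le)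
    have hcsq := mul_le_mul_of_nonneg_right (hc i) (sq_nonneg ‖w i - x i‖)
    have hL : (N : ℝ)⁻¹ * (L i / 2 * ‖w i - x i‖ ^ 2) = L i / N / 2 * ‖w i - x i‖ ^ 2 := by
      field_simp
    nlinarith
  have hreal : Fsum f w + c * ‖w - x‖ ^ 2 ≤ Fsum f x + (N : ℝ)⁻¹ * ∑ i, ⟪f' i (x i), w i - x i⟫
      + 2⁻¹ * ∑ i, (γ i)⁻¹ * ‖w i - x i‖ ^ 2 := by
    have := Finset.sum_le_sum fun i (_ : i ∈ Finset.univ) => hcomp i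
    simp only [Finset.sum_add_distrib, ← Finset.mul_sum] at this
    simpa only [Fsum, PiLp.norm_sq_eq_of_L2, PiLp.sub_apply] using this
  calc Phi f G w + ((c * ‖w - x‖ ^ 2 : ℝ) : EReal)
      = ((Fsum f w + c * ‖w - x‖ ^ 2 : ℝ) : EReal) + G w := by
        rw [Phi, EReal.coe_add, add_right_comm]
    _ ≤ Mdl f f' γ G w x := add_le_add_left (EReal.coe_le_coe_iff.2 hreal) _

lemma exists_pos_Phi_add_sq_le_Mdl (hf : ∀ i (u : E i), HasGradientAt (f i) (f' i u) u)
    (hlip : ∀ i (u v : E i), ‖f' i u - f' i v‖ ≤ L i * ‖u - v‖)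
    (hγ : ∀ i, 0 < γ i) (hγL : ∀ i, γ i * L i < (N : ℝ)) :
    ∃ c > 0, ∀ w x : PiLp 2 E,
      Phi f G w + ((c * dist w x ^ 2 : ℝ) : EReal) ≤ Mdl f f' γ G w x := by
  obtain ⟨c, hc, hcle⟩ := exists_pos_forall_le (a := fun i => ((γ i)⁻¹ - L i / N) / 2) fun i => by
    have hN : (0 : ℝ) < N := by exact_mod_cast i.pos
    have : L i / N < (γ i)⁻¹ := by
      rw [div_lt_iff₀ hN, inv_mul_eq_div, lt_div_iff₀ (hγ i)]
      linarith [hγL i]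
    linarith
  exact ⟨c, hc, fun w x => by simpa only [dist_eq_norm] using Phi_add_sq_le_Mdl hf hlip hcle w x⟩

end FBE

theorem fbe_level_bounded_iff_general
    (f : ∀ i, E i → ℝ) (f' : ∀ i, E i → E i) (L γ : Fin N → ℝ)
    (G : PiLp 2 E → EReal)
    (hf : ∀ i (u : E i), HasGradientAt (f i) (f' i u) u)
    (hlip : ∀ i (u v : E i), ‖f' i u - f' i v‖ ≤ L i * ‖u - v‖)
    (hγ : ∀ i, 0 < γ i) (hγL : ∀ i, γ i * L i < (N : ℝ))
    (hGbot : ∀ w, G w ≠ ⊥)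
    (hargmin : ∃ xs : PiLp 2 E, ∀ w, Phi f G xs ≤ Phi f G w)
    (φ : PiLp 2 E → ℝ)
    (hφ : ∀ x, ((φ x : ℝ) : EReal) = ⨅ w, Mdl f f' γ G w x)
    :
    (∀ α : ℝ, Bornology.IsBounded {x : PiLp 2 E | φ x ≤ α}) ↔
      (∀ α : ℝ, Bornology.IsBounded {x : PiLp 2 E | Phi f G x ≤ ((α : ℝ) : EReal)}) := by
  have hφΦ : ∀ x, (φ x : EReal) ≤ Phi f G x := fun x =>
    (hφ x).trans_le <| (iInf_le _ x).trans_eq (by simp [Mdl, Phi])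
  constructor
  · exact fun h α => (h α).subset fun x hx => EReal.coe_le_coe_iff.1 ((hφΦ x).trans hx)
  · intro h
    obtain ⟨c, hc, hM⟩ := exists_pos_Phi_add_sq_le_Mdl (G := G) hf hlip hγ hγL
    obtain ⟨xs, hxs⟩ := hargmin
    have hxs_ne_bot : Phi f G xs ≠ ⊥ := EReal.add_ne_bot_iff.2 ⟨EReal.coe_ne_bot _, hGbot xs⟩
    exact isBounded_sublevel_of_iInf_ge_add_sq hc
      (fun w => (EReal.coe_toReal_le hxs_ne_bot).trans (hxs w)) hM hφ h

/-- Lemma 2.4(iii): φ_Γ is level bounded iff Φ is level bounded. -/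
theorem fbe_level_bounded_iff
    (f : ∀ i, E i → ℝ) (f' : ∀ i, E i → E i) (L γ : Fin N → ℝ)
    (G : PiLp 2 E → EReal)
    (hf : ∀ i (u : E i), HasGradientAt (f i) (f' i u) u)
    (hL : ∀ i, 0 ≤ L i)
    (hlip : ∀ i (u v : E i), ‖f' i u - f' i v‖ ≤ L i * ‖u - v‖)
    (hγ : ∀ i, 0 < γ i) (hγL : ∀ i, γ i * L i < (N : ℝ))
    (hGlsc : LowerSemicontinuous G)
    (hGproper : ∃ w, G w ≠ ⊤) (hGbot : ∀ w, G w ≠ ⊥)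
    (hargmin : ∃ xs : PiLp 2 E, ∀ w, Phi f G xs ≤ Phi f G w)
    (φ : PiLp 2 E → ℝ)
    (hφ : ∀ x, ((φ x : ℝ) : EReal) = ⨅ w, Mdl f f' γ G w x)
    :
    (∀ α : ℝ, Bornology.IsBounded {x : PiLp 2 E | φ x ≤ α}) ↔
      (∀ α : ℝ, Bornology.IsBounded {x : PiLp 2 E | Phi f G x ≤ ((α : ℝ) : EReal)}) :=
  fbe_level_bounded_iff_general f f' L γ G hf hlip hγ hγL hGbot hargmin φ hφ
end
end

section
/- Suppose additionally that G is convex and each f_i is μ_{f_i}-strongly convex. Let x∈ℝ^{n_1}×⋯×ℝ^{n_N}, z=T(x), and for I⊆{1,…,N} let x_I^+ agree with z on coordinates in I and with x elsewhere. For probability weights (q_I) with ∑_{I∋i} q_I ≥ p_i > 0 for each i, it holds that ∑_I q_I·(φ_Γ(x_I^+) − min Φ) ≤ (1−c)(φ_Γ(x) − min Φ), where c = min_{i}{ξ_i p_i/γ_i} / max_{i}{(N − γ_i μ_{f_i})/(γ_i² μ_{f_i})} and ξ_i = (N − γ_i L_{f_i})/N. Consequently, the FBE contracts Q-linearly in conditional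 expectation along the randomized block-coordinate forward-backward algorithm. -/
open Filter Topology Metric Bornology Set
open scoped RealInnerProductSpace

noncomputable section

variable {N : ℕ} {E : Fin N → Type*}
  [∀ i, NormedAddCommGroup (E i)] [∀ i, InnerProductSpace ℝ (E i)]
  [∀ i, CompleteSpace (E i)]

/-!
Write `dᵢ = ‖zᵢ - xᵢ‖² / 2`. Since `F` is separable and `z` minimises the model at `x`, the
descent lemma applied block by block gives `φ(x_I⁺) ≤ φ(x) - ∑_{i ∈ I} (ξᵢ/γᵢ) dᵢ`, and averaging
over `I` turns this into an expected decrease of at least `minᵢ (ξᵢ pᵢ/γᵢ) ∑ᵢ dᵢ`. Conversely the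
model is `1`-strongly convex in the `Γ⁻¹`-norm, so `φ(x) + ½‖x⋆ - z‖²_{Γ⁻¹} ≤ M(x⋆, x)`, and
strong convexity of the `fᵢ` bounds `M(x⋆, x)` by `Φ(x⋆)` plus a weighted `‖x⋆ - x‖²`; completing
the square in each block yields `φ(x) - min Φ ≤ maxᵢ κᵢ ∑ᵢ dᵢ` with
`κᵢ = (N - γᵢμᵢ)/(γᵢ²μᵢ)`. The two estimates combine to the contraction.
-/

section InnerProductSpace

variable {X : Type*} [NormedAddCommGroup X] [InnerProductSpace ℝ X]

theorem norm_one_sub_smul_add_smul_sq (t : ℝ) (u v : X) :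
    ‖(1 - t) • u + t • v‖ ^ 2
      = (1 - t) * ‖u‖ ^ 2 + t * ‖v‖ ^ 2 - t * (1 - t) * ‖u - v‖ ^ 2 := by
  rw [norm_add_sq_real, norm_sub_sq_real, norm_smul, norm_smul,
    real_inner_smul_left, real_inner_smul_right]
  simp only [Real.norm_eq_abs, mul_pow, sq_abs]
  ring

theorem mul_norm_sq_sub_mul_norm_sq_le {a b : ℝ} (hab : a < b) (u v : X) :
    a * ‖u‖ ^ 2 - b * ‖v‖ ^ 2 ≤ a * b / (b - a) * ‖u - v‖ ^ 2 := by
  have key : (b - a) * (a * ‖u‖ ^ 2 - b * ‖v‖ ^ 2) + ‖a • u - b • v‖ ^ 2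
      = a * b * ‖u - v‖ ^ 2 := by
    rw [norm_sub_sq_real, norm_sub_sq_real, norm_smul, norm_smul, real_inner_smul_left,
      real_inner_smul_right]
    simp only [Real.norm_eq_abs, mul_pow, sq_abs]
    ring
  rw [div_mul_eq_mul_div, le_div_iff₀ (sub_pos.2 hab)]
  linear_combination key + sq_nonneg ‖a • u - b • v‖

variable [CompleteSpace X] {f : X → ℝ} {f' : X → X}

theorem HasGradientAt.hasDerivAt_add_smul {g a d : X} {t : ℝ}
    (hf : HasGradientAt f g (a + t • d)) :
    HasDerivAt (fun s : ℝ => f (a + s • d)) ⟪g, d⟫ t := by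
  have hline : HasDerivAt (fun s : ℝ => a + s • d) d t := by
    simpa using ((hasDerivAt_id t).smul_const d).const_add a
  have := hf.hasFDerivAt.comp_hasDerivAt t hline
  simp only [InnerProductSpace.toDual_apply_apply] at this
  exact this

theorem image_le_of_lipschitz_gradient {L : ℝ} (hf : ∀ u, HasGradientAt f (f' u) u)
    (hlip : ∀ u v, ‖f' u - f' v‖ ≤ L * ‖u - v‖) (a b : X) :
    f b ≤ f a + ⟪f' a, b - a⟫ + L / 2 * ‖b - a‖ ^ 2 := by
  set d := b - a
  let g : ℝ → ℝ := fun t => f (a + t • d) - t * ⟪f' a, d⟫ - L * t ^ 2 / 2 * ‖d‖ ^ 2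
  have hg : ∀ t, HasDerivAt g (⟪f' (a + t • d), d⟫ - ⟪f' a, d⟫ - L * t * ‖d‖ ^ 2) t := by
    intro t
    have hq : HasDerivAt (fun s : ℝ => L * s ^ 2 / 2 * ‖d‖ ^ 2) (L * t * ‖d‖ ^ 2) t := by
      have hsq : HasDerivAt (fun s : ℝ => s ^ 2) (2 * t) t := by simpa using hasDerivAt_pow 2 t
      exact (((hsq.const_mul L).div_const 2).mul_const (‖d‖ ^ 2)).congr_deriv (by ring)
    have hl : HasDerivAt (fun s : ℝ => s * ⟪f' a, d⟫) ⟪f' a, d⟫ t := by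
      simpa using (hasDerivAt_id t).mul_const ⟪f' a, d⟫
    exact (((hf _).hasDerivAt_add_smul).sub hl).sub hq
  have hanti : AntitoneOn g (Icc 0 1) := by
    refine antitoneOn_of_deriv_nonpos (convex_Icc 0 1)
      (fun t _ => (hg t).continuousAt.continuousWithinAt)
      (fun t _ => (hg t).differentiableAt.differentiableWithinAt) fun t ht => ?_
    rw [interior_Icc] at ht
    have hgrad : ‖f' (a + t • d) - f' a‖ ≤ L * (t * ‖d‖) := by
      simpa [norm_smul, abs_of_pos ht.1] using hlip (a + t • d) a
    have := (real_inner_le_norm _ _).trans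
      (mul_le_mul_of_nonneg_right hgrad (norm_nonneg d))
    rw [inner_sub_left] at this
    rw [(hg t).deriv]
    linear_combination this
  have := hanti (left_mem_Icc.2 zero_le_one) (right_mem_Icc.2 zero_le_one) zero_le_one
  simp only [g, d, one_smul, add_sub_cancel, zero_smul, add_zero] at this
  linarith

theorem StrongConvexOn.add_inner_add_le_of_hasGradientAt {μ : ℝ}
    (hsc : StrongConvexOn univ μ f) (hf : ∀ u, HasGradientAt f (f' u) u) (x w : X) :
    f x + ⟪f' x, w - x⟫ + μ / 2 * ‖w - x‖ ^ 2 ≤ f w := by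
  set d := w - x
  have hconv : ConvexOn ℝ univ (fun s : ℝ => f (x + s • d) - μ / 2 * ‖x + s • d‖ ^ 2) := by
    simpa [Function.comp_def, AffineMap.lineMap_apply_module', add_comm, d] using
      (strongConvexOn_iff_convex.1 hsc).comp_affineMap (AffineMap.lineMap x w)
  have hderiv : HasDerivAt (fun s : ℝ => f (x + s • d) - μ / 2 * ‖x + s • d‖ ^ 2)
      (⟪f' x, d⟫ - μ / 2 * (2 * ⟪x, d⟫)) 0 := by
    have hline : HasDerivAt (fun s : ℝ => x + s • d) d 0 := by
      simpa using ((hasDerivAt_id (0 : ℝ)).smul_const d).const_add x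
    have := ((hf (x + (0 : ℝ) • d)).hasDerivAt_add_smul).sub (hline.norm_sq.const_mul (μ / 2))
    simp only [zero_smul, add_zero] at this
    exact this
  have := hconv.le_slope_of_hasDerivAt (mem_univ 0) (mem_univ 1) zero_lt_one hderiv
  simp only [slope_def_field, one_smul, zero_smul, add_zero, sub_zero, div_one] at this
  rw [norm_add_sq_real, show x + d = w from add_sub_cancel x w] at this
  linarith

end InnerProductSpace

theorem EReal.eq_coe_sub_of_coe_add_eq_coe {a b : ℝ} {y : EReal} (h : (a : EReal) + y = b) :
    y = ((b - a : ℝ) : EReal) := by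
  induction y using EReal.rec with
  | bot => simp at h
  | top => simp at h
  | coe c =>
    rw [← EReal.coe_add, EReal.coe_eq_coe_iff] at h
    simp [← h]

theorem le_sub_of_forall_le_sub_one_sub_mul {a b P : ℝ}
    (h : ∀ t ∈ Ioo (0 : ℝ) 1, a ≤ b - (1 - t) * P) : a ≤ b - P := by
  have hlim : Tendsto (fun t : ℝ => b - (1 - t) * P) (𝓝[>] 0) (𝓝 (b - P)) := by
    have hcont : Continuous fun t : ℝ => b - (1 - t) * P := by fun_prop
    simpa using (hcont.tendsto 0).mono_left nhdsWithin_le_nhds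
  exact ge_of_tendsto hlim (by filter_upwards [Ioo_mem_nhdsGT one_pos] with t ht using h t ht)

def modelSmooth (f : ∀ i, E i → ℝ) (f' : ∀ i, E i → E i) (γ : Fin N → ℝ) (x w : PiLp 2 E) : ℝ :=
  Fsum f x + (N : ℝ)⁻¹ * ∑ i, ⟪f' i (x i), w i - x i⟫ + 2⁻¹ * ∑ i, (γ i)⁻¹ * ‖w i - x i‖ ^ 2

/-- `x_I⁺`. -/
def blockUpdate (I : Finset (Fin N)) (z x : PiLp 2 E) : PiLp 2 E :=
  WithLp.toLp 2 (fun i => if i ∈ I then z i else x i)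

/-- `ξᵢ / γᵢ` with `ξᵢ = (N - γᵢ L_{f_i}) / N`. -/
def descentRate (L γ : Fin N → ℝ) (i : Fin N) : ℝ := ((N : ℝ) - γ i * L i) / N / γ i

def growthRate (μ γ : Fin N → ℝ) (i : Fin N) : ℝ := ((N : ℝ) - γ i * μ i) / (γ i ^ 2 * μ i)

theorem descentRate_nonneg {L γ : Fin N → ℝ} (hγ : ∀ i, 0 < γ i) (hγL : ∀ i, γ i * L i < N)
    (i : Fin N) : 0 ≤ descentRate L γ i :=
  div_nonneg (div_nonneg (sub_nonneg.2 (hγL i).le) N.cast_nonneg) (hγ i).le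

section BlockModel

variable {f : ∀ i, E i → ℝ} {f' : ∀ i, E i → E i} {γ L μ : Fin N → ℝ} {G : PiLp 2 E → EReal}

omit [∀ i, CompleteSpace (E i)]

theorem Mdl_eq_modelSmooth_add (w x : PiLp 2 E) :
    Mdl f f' γ G w x = (modelSmooth f f' γ x w : EReal) + G w :=
  rfl

theorem modelSmooth_eq_sum (x w : PiLp 2 E) :
    modelSmooth f f' γ x w = ∑ i, ((N : ℝ)⁻¹ * f i (x i) + (N : ℝ)⁻¹ * ⟪f' i (x i), w i - x i⟫
      + 2⁻¹ * (γ i)⁻¹ * ‖w i - x i‖ ^ 2) := by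
  simp only [modelSmooth, Fsum, Finset.mul_sum, ← Finset.sum_add_distrib, mul_assoc]

theorem modelSmooth_self (x : PiLp 2 E) : modelSmooth f f' γ x x = Fsum f x := by
  simp [modelSmooth]

omit [∀ i, NormedAddCommGroup (E i)] [∀ i, InnerProductSpace ℝ (E i)] in
@[simp]
theorem blockUpdate_apply (I : Finset (Fin N)) (z x : PiLp 2 E) (i : Fin N) :
    blockUpdate I z x i = if i ∈ I then z i else x i :=
  rfl

omit [∀ i, NormedAddCommGroup (E i)] [∀ i, InnerProductSpace ℝ (E i)] in
theorem blockUpdate_univ (z x : PiLp 2 E) : blockUpdate Finset.univ z x = z := by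
  ext i
  simp

theorem modelSmooth_one_sub_smul_add_smul (x z v : PiLp 2 E) (t : ℝ) :
    modelSmooth f f' γ x ((1 - t) • z + t • v)
      = (1 - t) * modelSmooth f f' γ x z + t * modelSmooth f f' γ x v
        - t * (1 - t) * (2⁻¹ * ∑ i, (γ i)⁻¹ * ‖v i - z i‖ ^ 2) := by
  simp only [modelSmooth_eq_sum, Finset.mul_sum, ← Finset.sum_add_distrib,
    ← Finset.sum_sub_distrib]
  refine Finset.sum_congr rfl fun i _ => ?_
  have hwi : ((1 - t) • z + t • v) i - x i = (1 - t) • (z i - x i) + t • (v i - x i) := by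
    simp only [PiLp.add_apply, PiLp.smul_apply]
    module
  rw [hwi, inner_add_right, real_inner_smul_right, real_inner_smul_right,
    norm_one_sub_smul_add_smul_sq, sub_sub_sub_cancel_right, norm_sub_rev (z i) (v i)]
  ring

-- The model is `1`-strongly convex in the `Γ⁻¹`-norm: compare `z` with the points
-- `(1 - t) • z + t • v` and let `t → 0`.
theorem modelSmooth_add_le_of_mem_Tmap (hGconv : ERealConvex G) {x z v : PiLp 2 E}
    (hz : z ∈ Tmap f f' γ G x) {gz gv : ℝ} (hGz : G z = gz) (hGv : G v = gv) :
    modelSmooth f f' γ x z + gz + 2⁻¹ * ∑ i, (γ i)⁻¹ * ‖v i - z i‖ ^ 2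
      ≤ modelSmooth f f' γ x v + gv := by
  refine le_sub_iff_add_le.1 (le_sub_of_forall_le_sub_one_sub_mul fun t ht => ?_)
  have hG : G ((1 - t) • z + t • v) ≤ (((1 - t) * gz + t * gv : ℝ) : EReal) := by
    simpa [hGz, hGv] using hGconv z v (1 - t) t (by linarith [ht.2]) ht.1.le (by ring)
  have hmin : modelSmooth f f' γ x z + gz
      ≤ modelSmooth f f' γ x ((1 - t) • z + t • v) + ((1 - t) * gz + t * gv) := by
    have := (hz _).trans (add_le_add le_rfl hG)
    rw [Mdl_eq_modelSmooth_add, hGz] at this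
    exact_mod_cast this
  rw [modelSmooth_one_sub_smul_add_smul] at hmin
  refine (mul_le_mul_iff_right₀ ht.1).1 ?_
  linear_combination hmin

variable [∀ i, CompleteSpace (E i)]

theorem modelSmooth_le_Fsum_add (hf : ∀ i u, HasGradientAt (f i) (f' i u) u)
    (hsc : ∀ i, StrongConvexOn univ (μ i) (f i)) (x w : PiLp 2 E) :
    modelSmooth f f' γ x w ≤ Fsum f w + ∑ i, ((γ i)⁻¹ - μ i / N) / 2 * ‖w i - x i‖ ^ 2 := by
  rw [modelSmooth_eq_sum, Fsum, Finset.mul_sum, ← Finset.sum_add_distrib]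
  refine Finset.sum_le_sum fun i _ => ?_
  have := (hsc i).add_inner_add_le_of_hasGradientAt (hf i) (x i) (w i)
  linear_combination (N : ℝ)⁻¹ * this

theorem modelSmooth_blockUpdate_add_le (hγ : ∀ i, γ i ≠ 0)
    (hf : ∀ i u, HasGradientAt (f i) (f' i u) u)
    (hlip : ∀ i (u v : E i), ‖f' i u - f' i v‖ ≤ L i * ‖u - v‖)
    (I : Finset (Fin N)) (x z : PiLp 2 E) :
    modelSmooth f f' γ (blockUpdate I z x) z
        + ∑ i ∈ I, descentRate L γ i * (‖z i - x i‖ ^ 2 / 2)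
      ≤ modelSmooth f f' γ x z := by
  have hI : ∑ i ∈ I, descentRate L γ i * (‖z i - x i‖ ^ 2 / 2)
      = ∑ i, if i ∈ I then descentRate L γ i * (‖z i - x i‖ ^ 2 / 2) else 0 := by
    rw [Finset.sum_ite_mem, Finset.univ_inter]
  rw [modelSmooth_eq_sum, modelSmooth_eq_sum, hI, ← Finset.sum_add_distrib]
  refine Finset.sum_le_sum fun i _ => ?_
  by_cases hi : i ∈ I
  · have hN : (N : ℝ) ≠ 0 := Nat.cast_ne_zero.2 i.pos.ne'
    have hrate : descentRate L γ i = (γ i)⁻¹ - L i / N := by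
      rw [descentRate]
      field_simp [hγ i]
    have hdesc := image_le_of_lipschitz_gradient (hf i) (hlip i) (x i) (z i)
    simp only [blockUpdate_apply, hi, if_true, sub_self, inner_zero_right, norm_zero, hrate]
    linear_combination (N : ℝ)⁻¹ * hdesc
  · simp [hi]

section ForwardBackwardEnvelope

variable {φ : PiLp 2 E → ℝ} (hφ : ∀ x, (φ x : EReal) = ⨅ w, Mdl f f' γ G w x)
include hφ

omit [∀ i, CompleteSpace (E i)] in
theorem fbe_le_modelSmooth_add {b w : PiLp 2 E} {g : ℝ} (hGw : G w = g) :
    φ b ≤ modelSmooth f f' γ b w + g := by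
  have := (hφ b).trans_le (iInf_le _ w)
  rw [Mdl_eq_modelSmooth_add, hGw] at this
  exact_mod_cast this

omit [∀ i, CompleteSpace (E i)] in
theorem fbe_eq_of_mem_Tmap {x z : PiLp 2 E} (hz : z ∈ Tmap f f' γ G x) :
    G z = ((φ x - modelSmooth f f' γ x z : ℝ) : EReal) := by
  refine EReal.eq_coe_sub_of_coe_add_eq_coe ?_
  rw [← Mdl_eq_modelSmooth_add, hφ x]
  exact le_antisymm (le_iInf hz) (iInf_le _ z)

theorem fbe_blockUpdate_le (hγ : ∀ i, γ i ≠ 0) (hf : ∀ i u, HasGradientAt (f i) (f' i u) u)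
    (hlip : ∀ i (u v : E i), ‖f' i u - f' i v‖ ≤ L i * ‖u - v‖)
    {x z : PiLp 2 E} (hz : z ∈ Tmap f f' γ G x) (I : Finset (Fin N)) :
    φ (blockUpdate I z x) ≤ φ x - ∑ i ∈ I, descentRate L γ i * (‖z i - x i‖ ^ 2 / 2) := by
  have := fbe_le_modelSmooth_add hφ (b := blockUpdate I z x) (fbe_eq_of_mem_Tmap hφ hz)
  linarith [modelSmooth_blockUpdate_add_le hγ hf hlip I x z]

theorem Phi_le_fbe_of_mem_Tmap (hγ : ∀ i, 0 < γ i) (hγL : ∀ i, γ i * L i < N)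
    (hf : ∀ i u, HasGradientAt (f i) (f' i u) u)
    (hlip : ∀ i (u v : E i), ‖f' i u - f' i v‖ ≤ L i * ‖u - v‖)
    {x z : PiLp 2 E} (hz : z ∈ Tmap f f' γ G x) : Phi f G z ≤ φ x := by
  have hdesc := modelSmooth_blockUpdate_add_le (fun i => (hγ i).ne') hf hlip Finset.univ x z
  rw [blockUpdate_univ, modelSmooth_self] at hdesc
  have hdec : 0 ≤ ∑ i, descentRate L γ i * (‖z i - x i‖ ^ 2 / 2) :=
    Finset.sum_nonneg fun i _ => mul_nonneg (descentRate_nonneg hγ hγL i) (by positivity)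
  rw [Phi, fbe_eq_of_mem_Tmap hφ hz, ← EReal.coe_add, EReal.coe_le_coe_iff]
  linarith

theorem fbe_le_add_of_mem_Tmap (hGconv : ERealConvex G) (hγ : ∀ i, γ i ≠ 0)
    (hμ : ∀ i, 0 < μ i) (hf : ∀ i u, HasGradientAt (f i) (f' i u) u)
    (hsc : ∀ i, StrongConvexOn univ (μ i) (f i)) {x z v : PiLp 2 E}
    (hz : z ∈ Tmap f f' γ G x) {m : ℝ} (hm : (m : EReal) = Phi f G v) :
    φ x ≤ m + ∑ i, growthRate μ γ i * (‖z i - x i‖ ^ 2 / 2) := by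
  have hGv : G v = ((m - Fsum f v : ℝ) : EReal) := EReal.eq_coe_sub_of_coe_add_eq_coe hm.symm
  have hquad := modelSmooth_add_le_of_mem_Tmap hGconv hz (fbe_eq_of_mem_Tmap hφ hz) hGv
  have hsmooth := modelSmooth_le_Fsum_add (γ := γ) hf hsc x v
  have hblocks : ∑ i, ((γ i)⁻¹ - μ i / N) / 2 * ‖v i - x i‖ ^ 2
        - 2⁻¹ * ∑ i, (γ i)⁻¹ * ‖v i - z i‖ ^ 2
      ≤ ∑ i, growthRate μ γ i * (‖z i - x i‖ ^ 2 / 2) := by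
    rw [Finset.mul_sum, ← Finset.sum_sub_distrib]
    refine Finset.sum_le_sum fun i _ => ?_
    have hN : (0 : ℝ) < N := Nat.cast_pos.2 i.pos
    have hlt : ((γ i)⁻¹ - μ i / N) / 2 < 2⁻¹ * (γ i)⁻¹ := by
      have := div_pos (hμ i) hN
      linarith
    have := mul_norm_sq_sub_mul_norm_sq_le hlt (v i - x i) (v i - z i)
    have hrate : ((γ i)⁻¹ - μ i / N) / 2 * (2⁻¹ * (γ i)⁻¹)
        / (2⁻¹ * (γ i)⁻¹ - ((γ i)⁻¹ - μ i / N) / 2) = growthRate μ γ i / 2 := by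
      rw [growthRate]
      field_simp [hγ i, (hμ i).ne', hN.ne']
      ring
    rw [sub_sub_sub_cancel_left, hrate] at this
    linear_combination this
  linarith

end ForwardBackwardEnvelope

end BlockModel

section Averaging

variable {ι : Type*} [Fintype ι] [DecidableEq ι]

omit [DecidableEq ι] in
theorem le_one_sub_div_mul_of_le_sub_mul {e D c C S : ℝ} (he : e ≤ D - c * S) (hD : D ≤ C * S)
    (hD0 : 0 ≤ D) (hc : 0 ≤ c) (hS : 0 ≤ S) : e ≤ (1 - c / C) * D := by
  rcases le_or_gt C 0 with hC | hC
  · have hD0' : D = 0 := le_antisymm (hD.trans (mul_nonpos_of_nonpos_of_nonneg hC hS)) hD0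
    rw [hD0', mul_zero]
    linarith [mul_nonneg hc hS]
  · have : D / C ≤ S := (div_le_iff₀ hC).2 (by linarith)
    calc e ≤ D - c * S := he
      _ ≤ D - c * (D / C) := by gcongr
      _ = (1 - c / C) * D := by ring

theorem sum_mul_sum_mem_eq {R : Type*} [CommSemiring R] (q : Finset ι → R) (b : ι → R) :
    ∑ I, q I * ∑ i ∈ I, b i = ∑ i, (∑ I with i ∈ I, q I) * b i := by
  calc ∑ I, q I * ∑ i ∈ I, b i = ∑ I, ∑ i, if i ∈ I then q I * b i else 0 := by
        refine Finset.sum_congr rfl fun I _ => ?_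
        rw [Finset.sum_ite_mem, Finset.univ_inter, Finset.mul_sum]
    _ = ∑ i, (∑ I with i ∈ I, q I) * b i := by
        rw [Finset.sum_comm]
        simp_rw [Finset.sum_filter, Finset.sum_mul, ite_mul, zero_mul]

theorem sum_mul_le_one_sub_inf'_div_sup'_mul (hne : (Finset.univ : Finset ι).Nonempty)
    {q : Finset ι → ℝ} (hq0 : ∀ I, 0 ≤ q I) (hq1 : ∑ I, q I = 1) {p a c κ d : ι → ℝ}
    (hpq : ∀ i, p i ≤ ∑ I with i ∈ I, q I) (ha : ∀ i, 0 ≤ a i) (hd : ∀ i, 0 ≤ d i)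
    (hc : ∀ i, c i ≤ a i * p i) (hc0 : ∀ i, 0 ≤ c i) {y : Finset ι → ℝ} {D : ℝ}
    (hdec : ∀ I, y I ≤ D - ∑ i ∈ I, a i * d i) (hD : 0 ≤ D) (hgrowth : D ≤ ∑ i, κ i * d i) :
    ∑ I, q I * y I ≤ (1 - Finset.univ.inf' hne c / Finset.univ.sup' hne κ) * D := by
  refine le_one_sub_div_mul_of_le_sub_mul ?_ ?_ hD (Finset.le_inf' _ _ fun i _ => hc0 i)
    (Finset.sum_nonneg fun i (_ : i ∈ Finset.univ) => hd i)
  · calc ∑ I, q I * y I ≤ ∑ I, q I * (D - ∑ i ∈ I, a i * d i) :=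
          Finset.sum_le_sum fun I _ => mul_le_mul_of_nonneg_left (hdec I) (hq0 I)
      _ = D - ∑ i, (∑ I with i ∈ I, q I) * (a i * d i) := by
          simp only [mul_sub, Finset.sum_sub_distrib, ← Finset.sum_mul, hq1, one_mul,
            sum_mul_sum_mem_eq]
      _ ≤ D - Finset.univ.inf' hne c * ∑ i, d i := by
          rw [Finset.mul_sum]
          refine sub_le_sub_left (Finset.sum_le_sum fun i _ => ?_) D
          calc Finset.univ.inf' hne c * d i ≤ c i * d i :=
                mul_le_mul_of_nonneg_right (Finset.inf'_le _ (Finset.mem_univ i)) (hd i)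
            _ ≤ a i * p i * d i := mul_le_mul_of_nonneg_right (hc i) (hd i)
            _ ≤ (∑ I with i ∈ I, q I) * (a i * d i) := by
                rw [mul_comm (a i), mul_assoc]
                exact mul_le_mul_of_nonneg_right (hpq i) (mul_nonneg (ha i) (hd i))
  · rw [Finset.mul_sum]
    exact hgrowth.trans (Finset.sum_le_sum fun i _ =>
      mul_le_mul_of_nonneg_right (Finset.le_sup' κ (Finset.mem_univ i)) (hd i))

end Averaging

theorem bc_randomized_qlinear_contraction_general (hN : 0 < N)
    (f : ∀ i, E i → ℝ) (f' : ∀ i, E i → E i) (L γ : Fin N → ℝ)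
    (G : PiLp 2 E → EReal)
    (hf : ∀ i (u : E i), HasGradientAt (f i) (f' i u) u)
    (hlip : ∀ i (u v : E i), ‖f' i u - f' i v‖ ≤ L i * ‖u - v‖)
    (hγ : ∀ i, 0 < γ i) (hγL : ∀ i, γ i * L i < (N : ℝ))
    (φ : PiLp 2 E → ℝ)
    (hφ : ∀ x, ((φ x : ℝ) : EReal) = ⨅ w, Mdl f f' γ G w x)
    (μ : Fin N → ℝ) (hμ : ∀ i, 0 < μ i)
    (hsc : ∀ i, StrongConvexOn Set.univ (μ i) (f i))
    (hGconv : ERealConvex G)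
    (p : Fin N → ℝ) (hp : ∀ i, 0 < p i)
    (q : Finset (Fin N) → ℝ) (hq0 : ∀ I, 0 ≤ q I)
    (hq1 : ∑ I : Finset (Fin N), q I = 1)
    (hpq : ∀ i : Fin N, p i ≤ ∑ I ∈ Finset.univ.filter (fun I : Finset (Fin N) => i ∈ I), q I)
    (xs : PiLp 2 E) (hxs : ∀ w, Phi f G xs ≤ Phi f G w)
    (m : ℝ) (hm : ((m : ℝ) : EReal) = Phi f G xs)
    (x z : PiLp 2 E) (hz : z ∈ Tmap f f' γ G x) :
    ∑ I : Finset (Fin N), q I * (φ (WithLp.toLp 2 (fun i => if i ∈ I then z i else x i)) - m)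
      ≤ (1 - (Finset.univ.inf' (Finset.univ_nonempty_iff.mpr ⟨⟨0, hN⟩⟩)
              (fun i => (((N : ℝ) - γ i * L i) / (N : ℝ)) * p i / γ i))
            / (Finset.univ.sup' (Finset.univ_nonempty_iff.mpr ⟨⟨0, hN⟩⟩)
              (fun i => ((N : ℝ) - γ i * μ i) / (γ i ^ 2 * μ i)))) * (φ x - m) := by
  have hm_le : (m : EReal) ≤ φ x :=
    hm ▸ (hxs z).trans (Phi_le_fbe_of_mem_Tmap hφ hγ hγL hf hlip hz)
  refine sum_mul_le_one_sub_inf'_div_sup'_mul _ hq0 hq1 hpq (descentRate_nonneg hγ hγL)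
    (d := fun i => ‖z i - x i‖ ^ 2 / 2) (fun i => by positivity)
    (fun i => (mul_div_right_comm _ _ _).le)
    (fun i => by rw [mul_div_right_comm]; exact mul_nonneg (descentRate_nonneg hγ hγL i) (hp i).le)
    (y := fun I => φ (blockUpdate I z x) - m) (fun I => ?_)
    (sub_nonneg.2 (EReal.coe_le_coe_iff.1 hm_le)) ?_
  · linarith [fbe_blockUpdate_le hφ (fun i => (hγ i).ne') hf hlip hz I]
  · exact sub_le_iff_le_add'.2
      (fbe_le_add_of_mem_Tmap hφ hGconv (fun i => (hγ i).ne') hμ hf hsc hz hm)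

/-- Theorem 3.6, one-step form: with G convex and fᵢ μ_{f_i}-strongly
convex, the FBE contracts Q-linearly in conditional expectation:
∑_I q_I (φ_Γ(x_I⁺) - min Φ) ≤ (1-c)(φ_Γ(x) - min Φ),
c = minᵢ{ξᵢpᵢ/γᵢ} / maxᵢ{(N-γᵢμᵢ)/(γᵢ²μᵢ)}. -/
theorem bc_randomized_qlinear_contraction (hN : 0 < N)
    (f : ∀ i, E i → ℝ) (f' : ∀ i, E i → E i) (L γ : Fin N → ℝ)
    (G : PiLp 2 E → EReal)
    (hf : ∀ i (u : E i), HasGradientAt (f i) (f' i u) u)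
    (hL : ∀ i, 0 ≤ L i)
    (hlip : ∀ i (u v : E i), ‖f' i u - f' i v‖ ≤ L i * ‖u - v‖)
    (hγ : ∀ i, 0 < γ i) (hγL : ∀ i, γ i * L i < (N : ℝ))
    (hGlsc : LowerSemicontinuous G)
    (hGproper : ∃ w, G w ≠ ⊤) (hGbot : ∀ w, G w ≠ ⊥)
    (hargmin : ∃ xs : PiLp 2 E, ∀ w, Phi f G xs ≤ Phi f G w)
    (φ : PiLp 2 E → ℝ)
    (hφ : ∀ x, ((φ x : ℝ) : EReal) = ⨅ w, Mdl f f' γ G w x)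
    (μ : Fin N → ℝ) (hμ : ∀ i, 0 < μ i)
    (hsc : ∀ i, StrongConvexOn Set.univ (μ i) (f i))
    (hGconv : ERealConvex G)
    (p : Fin N → ℝ) (hp : ∀ i, 0 < p i)
    (q : Finset (Fin N) → ℝ) (hq0 : ∀ I, 0 ≤ q I)
    (hq1 : ∑ I : Finset (Fin N), q I = 1)
    (hpq : ∀ i : Fin N, p i ≤ ∑ I ∈ Finset.univ.filter (fun I : Finset (Fin N) => i ∈ I), q I)
    (xs : PiLp 2 E) (hxs : ∀ w, Phi f G xs ≤ Phi f G w)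
    (m : ℝ) (hm : ((m : ℝ) : EReal) = Phi f G xs)
    (x z : PiLp 2 E) (hz : z ∈ Tmap f f' γ G x) :
    ∑ I : Finset (Fin N), q I * (φ (WithLp.toLp 2 (fun i => if i ∈ I then z i else x i)) - m)
      ≤ (1 - (Finset.univ.inf' (Finset.univ_nonempty_iff.mpr ⟨⟨0, hN⟩⟩)
              (fun i => (((N : ℝ) - γ i * L i) / (N : ℝ)) * p i / γ i))
            / (Finset.univ.sup' (Finset.univ_nonempty_iff.mpr ⟨⟨0, hN⟩⟩)
              (fun i => ((N : ℝ) - γ i * μ i) / (γ i ^ 2 * μ i)))) * (φ x - m) :=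
  bc_randomized_qlinear_contraction_general hN f f' L γ G hf hlip hγ hγL φ hφ μ hμ hsc hGconv p hp q
    hq0 hq1 hpq xs hxs m hm x z hz
end
end
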